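/- arXiv:2302.07011 — 8 statements merged into one kernel-verified Lean document; each statement's English description precedes it below -/
import Mathlib

section
/- Let n ≥ 1, let L : ℝⁿ → ℝ be any function, and let w, c ∈ ℝⁿ with wᵢ ≠ 0 and cᵢ ≠ 0 for every coordinate i. Assume the multiplicative reparametrization invariance L(v ⊙ c) = L(v) for all v ∈ ℝⁿ. Then for every ρ > 0 and every p ∈ [1, ∞], the worst-case adaptive sharpness is invariant: sup { L(w ⊙ c + δ) − L(w ⊙ c) : δ ∈ ℝⁿ, ‖δ ⊙ |w ⊙ c|⁻¹‖_p ≤ ρ } = sup { L(w + δ) − L(w) : δ ∈ ℝⁿ, ‖δ ⊙ |w|⁻¹‖_p ≤ ρ }, where the suprema are taken in the extended reals. -/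
open scoped ENNReal NNReal

theorem PiLp.norm_toLp_congr {ι : Type*} [Fintype ι] {β : ι → Type*}
    [∀ i, SeminormedAddCommGroup (β i)] (p : ℝ≥0∞) {f g : ∀ i, β i}
    (h : ∀ i, ‖f i‖ = ‖g i‖) : ‖WithLp.toLp p f‖ = ‖WithLp.toLp p g‖ := by
  rcases p.trichotomy with rfl | rfl | hp
  · simp only [PiLp.norm_eq_card, h]
  · simp only [PiLp.norm_eq_ciSup, h]
  · simp only [PiLp.norm_eq_sum hp, h]

theorem worst_case_adaptive_sharpness_reparam_invariant_general
    (n : ℕ) (L : (Fin n → ℝ) → ℝ) (w c : Fin n → ℝ)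
    (hc : ∀ i, c i ≠ 0)
    (hinv : ∀ v : Fin n → ℝ, L (v * c) = L v)
    (ρ : ℝ) (p : ℝ≥0∞) :
    sSup {s : EReal | ∃ δ : Fin n → ℝ,
        ‖(WithLp.equiv p (Fin n → ℝ)).symm (fun i => δ i / |w i * c i|)‖ ≤ ρ ∧
        s = ((L (w * c + δ) - L (w * c) : ℝ) : EReal)} =
    sSup {s : EReal | ∃ δ : Fin n → ℝ,
        ‖(WithLp.equiv p (Fin n → ℝ)).symm (fun i => δ i / |w i|)‖ ≤ ρ ∧
        s = ((L (w + δ) - L w : ℝ) : EReal)} := by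
  let scale : (Fin n → ℝ) ≃ (Fin n → ℝ) :=
    Equiv.piCongrRight fun i => Equiv.mulRight₀ (c i) (hc i)
  have hnorm (δ : Fin n → ℝ) :
      ‖WithLp.toLp p (fun i => (δ * c) i / |w i * c i|)‖ =
        ‖WithLp.toLp p (fun i => δ i / |w i|)‖ :=
    PiLp.norm_toLp_congr p fun i => by
      simp only [Pi.mul_apply, Real.norm_eq_abs, abs_div, abs_mul, abs_abs,
        mul_div_mul_right _ _ (abs_ne_zero.mpr (hc i))]
  have hloss (δ : Fin n → ℝ) : L (w * c + δ * c) - L (w * c) = L (w + δ) - L w := by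
    rw [← add_mul, hinv, hinv]
  congr 1
  ext s
  refine (scale.exists_congr fun δ => ?_).symm
  simp only [WithLp.equiv_symm_apply]
  rw [show scale δ = δ * c from rfl, hnorm, hloss]

/-- Worst-case adaptive sharpness (with elementwise scaling `c = |w|`) is invariant
under multiplicative reparametrizations `v ↦ v ⊙ c` that leave the loss unchanged. -/
theorem worst_case_adaptive_sharpness_reparam_invariant
    (n : ℕ) (hn : 1 ≤ n) (L : (Fin n → ℝ) → ℝ) (w c : Fin n → ℝ)
    (hw : ∀ i, w i ≠ 0) (hc : ∀ i, c i ≠ 0)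
    (hinv : ∀ v : Fin n → ℝ, L (v * c) = L v)
    (ρ : ℝ) (hρ : 0 < ρ) (p : ℝ≥0∞) [Fact (1 ≤ p)] :
    sSup {s : EReal | ∃ δ : Fin n → ℝ,
        ‖(WithLp.equiv p (Fin n → ℝ)).symm (fun i => δ i / |w i * c i|)‖ ≤ ρ ∧
        s = ((L (w * c + δ) - L (w * c) : ℝ) : EReal)} =
    sSup {s : EReal | ∃ δ : Fin n → ℝ,
        ‖(WithLp.equiv p (Fin n → ℝ)).symm (fun i => δ i / |w i|)‖ ≤ ρ ∧
        s = ((L (w + δ) - L w : ℝ) : EReal)} :=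
  worst_case_adaptive_sharpness_reparam_invariant_general n L w c hc hinv ρ p
end

section
/- Let n ≥ 1, let L : ℝⁿ → ℝ be measurable, and let w, c ∈ ℝⁿ with cᵢ ≠ 0 for every coordinate i. Assume L(v ⊙ c) = L(v) for all v ∈ ℝⁿ. Fix ρ > 0, let ν be the law of a random vector δ with independent coordinates δᵢ ~ N(0, ρ² wᵢ²), and let μ be the law of a random vector δ with independent coordinates δᵢ ~ N(0, ρ² (wᵢ cᵢ)²). If the map δ ↦ L(w + δ) is ν-integrable, then δ ↦ L(w ⊙ c + δ) is μ-integrable and ∫ L(w ⊙ c + δ) dμ(δ) − L(w ⊙ c) = ∫ L(w + δ) dν(δ) − L(w); that is, the average-case adaptive sharpness is invariant under the multiplicative reparametrization. -/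
open MeasureTheory ProbabilityTheory

/-- Average-case adaptive sharpness with Gaussian perturbations of coordinatewise standard
deviation `ρ |wᵢ|` is invariant under multiplicative reparametrizations `v ↦ v ⊙ c`. -/
theorem avg_case_adaptive_sharpness_reparam_invariant
    (n : ℕ) (hn : 1 ≤ n) (L : (Fin n → ℝ) → ℝ) (hL : Measurable L)
    (w c : Fin n → ℝ) (hc : ∀ i, c i ≠ 0)
    (hinv : ∀ v : Fin n → ℝ, L (v * c) = L v)
    (ρ : ℝ) (hρ : 0 < ρ)
    (hint : Integrable (fun δ : Fin n → ℝ => L (w + δ))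
      (Measure.pi fun i : Fin n => gaussianReal 0 ((ρ ^ 2 * w i ^ 2).toNNReal))) :
    Integrable (fun δ : Fin n → ℝ => L (w * c + δ))
      (Measure.pi fun i : Fin n => gaussianReal 0 ((ρ ^ 2 * (w i * c i) ^ 2).toNNReal)) ∧
    (∫ δ : Fin n → ℝ, L (w * c + δ)
        ∂(Measure.pi fun i : Fin n => gaussianReal 0 ((ρ ^ 2 * (w i * c i) ^ 2).toNNReal)))
      - L (w * c)
    = (∫ δ : Fin n → ℝ, L (w + δ)
        ∂(Measure.pi fun i : Fin n => gaussianReal 0 ((ρ ^ 2 * w i ^ 2).toNNReal)))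
      - L w := by
  set ν : Measure (Fin n → ℝ) :=
    Measure.pi fun i : Fin n => gaussianReal 0 ((ρ ^ 2 * w i ^ 2).toNNReal) with hν
  -- each coordinate measure after map
  have hcoord : ∀ i : Fin n,
      (gaussianReal 0 ((ρ ^ 2 * w i ^ 2).toNNReal)).map (· * c i)
        = gaussianReal 0 ((ρ ^ 2 * (w i * c i) ^ 2).toNNReal) := by
    intro i
    rw [gaussianReal_map_mul_const (c i)]
    congr 1
    · ring
    · ext
      push_cast
      rw [Real.coe_toNNReal _ (by positivity), Real.coe_toNNReal _ (by positivity)]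
      ring
  have hm : ∀ i : Fin n, Measurable (fun x : ℝ => x * c i) := fun i => measurable_mul_const _
  have hT0 : Measurable (fun x : Fin n → ℝ => x * c) :=
    measurable_pi_lambda _ fun i => (hm i).comp (measurable_pi_apply i)
  have key : (Measure.pi fun i : Fin n =>
        gaussianReal 0 ((ρ ^ 2 * (w i * c i) ^ 2).toNNReal))
      = ν.map (fun x : Fin n → ℝ => x * c) := by
    refine Measure.pi_eq (μ := fun i => gaussianReal 0 ((ρ ^ 2 * (w i * c i) ^ 2).toNNReal)) fun s hs => ?_
    rw [Measure.map_apply hT0 (MeasurableSet.univ_pi fun i => hs i)]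
    have hpre : (fun x : Fin n → ℝ => x * c) ⁻¹' Set.univ.pi s
        = Set.univ.pi (fun i => (fun x : ℝ => x * c i) ⁻¹' s i) := by
      ext x; simp [Set.mem_pi, Pi.mul_apply]
    rw [hpre, hν, Measure.pi_pi]
    exact Finset.prod_congr rfl fun i _ => by
      rw [← Measure.map_apply (hm i) (hs i), hcoord i]
  have hT : Measurable (fun x : Fin n → ℝ => x * c) :=
    measurable_pi_lambda _ fun i =>
      (measurable_mul_const (c i)).comp (measurable_pi_apply i)
  have hf : Measurable (fun δ : Fin n → ℝ => L (w * c + δ)) :=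
    hL.comp (measurable_const.add measurable_id)
  have hcomp : ∀ x : Fin n → ℝ, L (w * c + x * c) = L (w + x) := by
    intro x
    have : w * c + x * c = (w + x) * c := by ring
    rw [this, hinv]
  have hint' : Integrable (fun δ : Fin n → ℝ => L (w * c + δ))
      (Measure.pi fun i : Fin n => gaussianReal 0 ((ρ ^ 2 * (w i * c i) ^ 2).toNNReal)) := by
    rw [key, integrable_map_measure hf.aestronglyMeasurable hT.aemeasurable]
    have : (fun δ : Fin n → ℝ => L (w * c + δ)) ∘ (fun x => x * c)
        = fun x => L (w + x) := funext fun x => hcomp x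
    rw [this]; exact hint
  refine ⟨hint', ?_⟩
  have hI : (∫ δ : Fin n → ℝ, L (w * c + δ)
      ∂(Measure.pi fun i : Fin n => gaussianReal 0 ((ρ ^ 2 * (w i * c i) ^ 2).toNNReal)))
      = ∫ δ : Fin n → ℝ, L (w + δ) ∂ν := by
    rw [key, integral_map hT.aemeasurable hf.aestronglyMeasurable]
    exact integral_congr_ae (Filter.Eventually.of_forall hcomp)
  rw [hI, hinv w]
end

section
/- Let n ≥ 1 and let L : ℝⁿ → ℝ be three times continuously differentiable. Fix w ∈ ℝⁿ and let p, q ∈ [1, ∞] with 1/p + 1/q = 1. Define g ∈ ℝⁿ by gᵢ = (∂L/∂wᵢ)(w) · |wᵢ|. If g ≠ 0, then lim_{ρ → 0⁺} (1/ρ) · sup { L(w + γ ⊙ |w|) − L(w) : ‖γ‖_p ≤ ρ } = ‖g‖_q. -/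
/-!
Put `F δ = L (w + δ ⊙ |w|)` on `ℓ^p`. For any `f` differentiable at `x`, the supremum of
`f (x + δ) - f x` over `‖δ‖ ≤ ρ` is `ρ ‖f'‖ + o(ρ)`: the linear part `f' δ` has supremum `ρ ‖f'‖`
on the ball, and the remainder is `o(ρ)` uniformly on it. Here `F' 0 γ = ∑ γᵢ gᵢ`, and the dual
norm of this functional on `ℓ^p` is `‖g‖_q` by Hölder's inequality and its equality case.
-/

open scoped ENNReal NNReal Topology
open Filter Metric

theorem SignType.abs_coe_le_one {α : Type*} [Ring α] [LinearOrder α] [IsStrictOrderedRing α]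
    (s : SignType) : |(s : α)| ≤ 1 := by
  cases s <;> simp

namespace PiLp

variable {ι : Type*} [Fintype ι]

theorem sum_norm_mul_norm_le_of_one_top {β γ : ι → Type*} [∀ i, SeminormedAddCommGroup (β i)]
    [∀ i, SeminormedAddCommGroup (γ i)] (x : PiLp 1 β) (y : PiLp ∞ γ) :
    ∑ i, ‖x i‖ * ‖y i‖ ≤ ‖x‖ * ‖y‖ := by
  rw [norm_eq_of_L1, Finset.sum_mul]
  gcongr with i
  exact norm_apply_le y i

theorem sum_norm_mul_norm_le {β γ : ι → Type*} [∀ i, SeminormedAddCommGroup (β i)]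
    [∀ i, SeminormedAddCommGroup (γ i)] (p q : ℝ≥0∞) [p.HolderConjugate q]
    (x : PiLp p β) (y : PiLp q γ) :
    ∑ i, ‖x i‖ * ‖y i‖ ≤ ‖x‖ * ‖y‖ := by
  rcases eq_or_ne p ∞ with rfl | hp
  · obtain rfl : q = 1 := (ENNReal.HolderConjugate.eq_top_iff_eq_one ∞ q).1 rfl
    simpa only [mul_comm] using sum_norm_mul_norm_le_of_one_top y x
  rcases eq_or_ne q ∞ with rfl | hq
  · obtain rfl : p = 1 := (ENNReal.HolderConjugate.eq_top_iff_eq_one ∞ p).1 rfl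
    exact sum_norm_mul_norm_le_of_one_top x y
  have hpq := ENNReal.HolderConjugate.toReal_of_ne_top hp hq
  rw [norm_eq_sum hpq.pos, norm_eq_sum hpq.symm.pos]
  exact Real.inner_le_Lp_mul_Lq_of_nonneg _ hpq (fun i _ => norm_nonneg _)
    (fun i _ => norm_nonneg _)

theorem exists_norm_le_one_sum_mul_eq_norm_of_top (y : PiLp ∞ fun _ : ι => ℝ) :
    ∃ x : PiLp 1 (fun _ : ι => ℝ), ‖x‖ ≤ 1 ∧ ∑ i, x i * y i = ‖y‖ := by
  classical
  cases isEmpty_or_nonempty ι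
  · exact ⟨0, by simp, by simp [norm_eq_ciSup]⟩
  obtain ⟨j, hj⟩ := Finite.exists_max fun i => ‖y i‖
  have hy : ‖y‖ = |y j| :=
    le_antisymm (by simpa [norm_eq_ciSup] using ciSup_le hj) (norm_apply_le y j)
  refine ⟨single 1 j (SignType.sign (y j) : ℝ), ?_, ?_⟩
  · rw [norm_single, Real.norm_eq_abs]
    exact SignType.abs_coe_le_one _
  · rw [hy, Finset.sum_eq_single j (fun i _ hi => by simp [hi]) (by simp)]
    simp

theorem exists_norm_le_one_sum_mul_eq_norm_of_one (y : PiLp 1 fun _ : ι => ℝ) :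
    ∃ x : PiLp ∞ (fun _ : ι => ℝ), ‖x‖ ≤ 1 ∧ ∑ i, x i * y i = ‖y‖ := by
  refine ⟨WithLp.toLp ∞ fun i => (SignType.sign (y i) : ℝ), ?_, by simp [norm_eq_of_L1]⟩
  rw [norm_toLp]
  exact (pi_norm_le_iff_of_nonneg zero_le_one).2 fun i => SignType.abs_coe_le_one _

theorem exists_norm_le_one_sum_mul_eq_norm_of_ne_top {p q : ℝ≥0∞} [p.HolderConjugate q]
    (hp : p ≠ ∞) (hq : q ≠ ∞) (y : PiLp q fun _ : ι => ℝ) :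
    ∃ x : PiLp p (fun _ : ι => ℝ), ‖x‖ ≤ 1 ∧ ∑ i, x i * y i = ‖y‖ := by
  have hpq := ENNReal.HolderConjugate.toReal_of_ne_top hp hq
  obtain ⟨⟨g, hg, hgy⟩, -⟩ := NNReal.isGreatest_Lp Finset.univ (fun i => ‖y i‖₊) hpq.symm
  refine ⟨WithLp.toLp p fun i => SignType.sign (y i) * g i, ?_, ?_⟩
  · rw [norm_eq_sum hpq.pos]
    refine Real.rpow_le_one (by positivity) ?_ (by positivity)
    calc ∑ i, ‖SignType.sign (y i) * (g i : ℝ)‖ ^ p.toReal ≤ ∑ i, (g i : ℝ) ^ p.toReal := by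
          gcongr with i
          rw [norm_mul, Real.norm_eq_abs, NNReal.norm_eq]
          exact mul_le_of_le_one_left (g i).2 (SignType.abs_coe_le_one _)
      _ ≤ 1 := by exact_mod_cast hg
  · rw [norm_eq_sum hpq.symm.pos]
    have hgy' : ∑ i, ‖y i‖ * (g i : ℝ) = (∑ i, ‖y i‖ ^ q.toReal) ^ (1 / q.toReal) := by
      simpa using congrArg NNReal.toReal hgy
    rw [← hgy']
    refine Finset.sum_congr rfl fun i _ => ?_
    simp only [Real.norm_eq_abs]
    rw [← sign_mul_self (y i)]
    ring

theorem exists_norm_le_one_sum_mul_eq_norm (p q : ℝ≥0∞) [p.HolderConjugate q]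
    (y : PiLp q fun _ : ι => ℝ) :
    ∃ x : PiLp p (fun _ : ι => ℝ), ‖x‖ ≤ 1 ∧ ∑ i, x i * y i = ‖y‖ := by
  rcases eq_or_ne p ∞ with rfl | hp
  · obtain rfl : q = 1 := (ENNReal.HolderConjugate.eq_top_iff_eq_one ∞ q).1 rfl
    exact exists_norm_le_one_sum_mul_eq_norm_of_one y
  rcases eq_or_ne q ∞ with rfl | hq
  · obtain rfl : p = 1 := (ENNReal.HolderConjugate.eq_top_iff_eq_one ∞ p).1 rfl
    exact exists_norm_le_one_sum_mul_eq_norm_of_top y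
  exact exists_norm_le_one_sum_mul_eq_norm_of_ne_top hp hq y

theorem opNorm_eq_norm_of_apply_eq_sum_mul {p q : ℝ≥0∞} [Fact (1 ≤ p)] [p.HolderConjugate q]
    (φ : PiLp p (fun _ : ι => ℝ) →L[ℝ] ℝ) (c : PiLp q fun _ : ι => ℝ)
    (hφ : ∀ x, φ x = ∑ i, x i * c i) :
    ‖φ‖ = ‖c‖ := by
  have : Fact (1 ≤ q) := ⟨ENNReal.HolderConjugate.one_le q p⟩
  refine le_antisymm (φ.opNorm_le_bound (norm_nonneg _) fun x => ?_) ?_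
  · calc ‖φ x‖ ≤ ∑ i, ‖x i‖ * ‖c i‖ := by
          rw [hφ]; exact (norm_sum_le _ _).trans_eq (by simp only [norm_mul])
      _ ≤ ‖x‖ * ‖c‖ := sum_norm_mul_norm_le p q x c
      _ = ‖c‖ * ‖x‖ := mul_comm _ _
  · obtain ⟨x, hx, hxc⟩ := exists_norm_le_one_sum_mul_eq_norm p q c
    calc ‖c‖ = φ x := by rw [hφ, hxc]
      _ ≤ ‖φ x‖ := le_abs_self _
      _ ≤ ‖φ‖ := φ.unit_le_opNorm x hx

end PiLp

section Sharpness

variable {E : Type*} [NormedAddCommGroup E]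

noncomputable def worstCaseSharpness (f : E → ℝ) (x : E) (ρ : ℝ) : ℝ :=
  sSup ((fun δ => f (x + δ) - f x) '' closedBall 0 ρ)

variable {f : E → ℝ} {x : E} {ρ b : ℝ}

theorem worstCaseSharpness_le (hρ : 0 ≤ ρ) (h : ∀ δ, ‖δ‖ ≤ ρ → f (x + δ) - f x ≤ b) :
    worstCaseSharpness f x ρ ≤ b :=
  csSup_le ((nonempty_closedBall.2 hρ).image _) <| Set.forall_mem_image.2 fun δ hδ =>
    h δ (mem_closedBall_zero_iff.1 hδ)

theorem le_worstCaseSharpness (h : ∀ δ, ‖δ‖ ≤ ρ → f (x + δ) - f x ≤ b) {δ : E} (hδ : ‖δ‖ ≤ ρ) :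
    f (x + δ) - f x ≤ worstCaseSharpness f x ρ :=
  le_csSup ⟨b, Set.forall_mem_image.2 fun δ hδ => h δ (mem_closedBall_zero_iff.1 hδ)⟩
    ⟨δ, mem_closedBall_zero_iff.2 hδ, rfl⟩

variable [NormedSpace ℝ E]

theorem ContinuousLinearMap.exists_norm_le_one_lt_apply (φ : E →L[ℝ] ℝ) {r : ℝ} (hr : r < ‖φ‖) :
    ∃ y, ‖y‖ ≤ 1 ∧ r < φ y := by
  obtain ⟨y, hy, hry⟩ := φ.exists_lt_apply_of_lt_opNorm hr
  rw [Real.norm_eq_abs] at hry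
  rcases le_total 0 (φ y) with hφy | hφy
  · exact ⟨y, hy.le, by rwa [abs_of_nonneg hφy] at hry⟩
  · exact ⟨-y, by simpa using hy.le, by rwa [abs_of_nonpos hφy, ← map_neg] at hry⟩

theorem HasFDerivAt.eventually_forall_abs_sub_le {f' : E →L[ℝ] ℝ} (hf : HasFDerivAt f f' x)
    {ε : ℝ} (hε : 0 < ε) :
    ∀ᶠ ρ in 𝓝[>] 0, ∀ δ, ‖δ‖ ≤ ρ → |f (x + δ) - f x - f' δ| ≤ ε * ρ := by
  have hsmall := (hasFDerivAt_iff_isLittleO_nhds_zero.1 hf).def hε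
  filter_upwards [nhdsWithin_le_nhds ((tendsto_closedBall_smallSets 0).eventually
    (eventually_smallSets_forall.2 hsmall))] with ρ hρ δ hδ
  calc |f (x + δ) - f x - f' δ| ≤ ε * ‖δ‖ := hρ δ (mem_closedBall_zero_iff.2 hδ)
    _ ≤ ε * ρ := by gcongr

theorem HasFDerivAt.tendsto_inv_mul_worstCaseSharpness {f' : E →L[ℝ] ℝ}
    (hf : HasFDerivAt f f' x) :
    Tendsto (fun ρ => ρ⁻¹ * worstCaseSharpness f x ρ) (𝓝[>] 0) (𝓝 ‖f'‖) := by
  refine Metric.tendsto_nhds.2 fun ε hε => ?_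
  obtain ⟨y, hy, hfy⟩ :=
    f'.exists_norm_le_one_lt_apply (sub_lt_self ‖f'‖ (by positivity : 0 < ε / 3))
  filter_upwards [hf.eventually_forall_abs_sub_le (by positivity : 0 < ε / 3),
    self_mem_nhdsWithin] with ρ hrem (hρ : 0 < ρ)
  have hub : ∀ δ, ‖δ‖ ≤ ρ → f (x + δ) - f x ≤ ρ * (‖f'‖ + ε / 3) := fun δ hδ => by
    have h1 := (abs_le.1 (hrem δ hδ)).2
    have h2 : f' δ ≤ ‖f'‖ * ρ := (le_abs_self _).trans <| f'.le_opNorm_of_le hδ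
    linarith
  have hyρ : ‖ρ • y‖ ≤ ρ := by
    rw [norm_smul, Real.norm_of_nonneg hρ.le]
    exact mul_le_of_le_one_right hρ.le hy
  have hlb : ρ * (‖f'‖ - 2 * (ε / 3)) ≤ f (x + ρ • y) - f x := by
    have h1 := (abs_le.1 (hrem _ hyρ)).1
    have h2 : ρ * (‖f'‖ - ε / 3) ≤ f' (ρ • y) := by
      rw [map_smul, smul_eq_mul]; gcongr
    linarith
  have hle := worstCaseSharpness_le hρ.le hub
  have hge := hlb.trans (le_worstCaseSharpness hub hyρ)
  rw [Real.dist_eq, abs_sub_lt_iff]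
  constructor
  · linarith [(inv_mul_le_iff₀ hρ).2 hle]
  · linarith [(le_inv_mul_iff₀ hρ).2 hge]

end Sharpness

theorem worst_case_adaptive_sharpness_first_order_general
    (n : ℕ) (L : (Fin n → ℝ) → ℝ) (hL : ContDiff ℝ 3 L)
    (w : Fin n → ℝ)
    (p q : ℝ≥0∞) [Fact (1 ≤ p)] (hpq : 1 / p + 1 / q = 1) :
    Tendsto (fun ρ : ℝ => (1 / ρ) *
        sSup {s : ℝ | ∃ γ : Fin n → ℝ,
          ‖(WithLp.equiv p (Fin n → ℝ)).symm γ‖ ≤ ρ ∧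
          s = L (w + fun i => γ i * |w i|) - L w})
      (nhdsWithin 0 (Set.Ioi 0))
      (nhds ‖(WithLp.equiv q (Fin n → ℝ)).symm
        (fun i => fderiv ℝ L w (Pi.single i 1) * |w i|)‖) := by
  have : p.HolderConjugate q := ENNReal.holderConjugate_iff.2 (by simpa only [one_div] using hpq)
  let T : PiLp p (fun _ : Fin n => ℝ) →L[ℝ] (Fin n → ℝ) :=
    ContinuousLinearMap.pi fun i => (PiLp.proj p (fun _ => ℝ) i).smulRight |w i|
  have hF : HasFDerivAt (fun δ => L (w + T δ)) ((fderiv ℝ L w).comp T) 0 := by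
    have hLw : HasFDerivAt L (fderiv ℝ L w) (w + T 0) := by
      rw [map_zero, add_zero]
      exact (hL.differentiable (by norm_num) w).hasFDerivAt
    exact hLw.comp 0 (T.hasFDerivAt.const_add w)
  have hnorm : ‖(fderiv ℝ L w).comp T‖ = ‖(WithLp.equiv q (Fin n → ℝ)).symm
      (fun i => fderiv ℝ L w (Pi.single i 1) * |w i|)‖ := by
    refine PiLp.opNorm_eq_norm_of_apply_eq_sum_mul _ _ fun δ => ?_
    rw [ContinuousLinearMap.comp_apply, pi_eq_sum_univ' (T δ), map_sum]
    simp [T, mul_comm, mul_left_comm, mul_assoc]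
  have hset : ∀ ρ, sSup {s : ℝ | ∃ γ : Fin n → ℝ,
      ‖(WithLp.equiv p (Fin n → ℝ)).symm γ‖ ≤ ρ ∧ s = L (w + fun i => γ i * |w i|) - L w} =
      worstCaseSharpness (fun δ => L (w + T δ)) 0 ρ := by
    intro ρ
    unfold worstCaseSharpness
    congr 1
    ext s
    constructor
    · rintro ⟨γ, hγ, rfl⟩
      exact ⟨WithLp.toLp p γ, by simpa using hγ, by simp [T, ← Pi.zero_def]⟩
    · rintro ⟨δ, hδ, rfl⟩
      exact ⟨δ.ofLp, by simpa using hδ, by simp [T, ← Pi.zero_def]⟩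
  simpa only [hset, hnorm, one_div] using hF.tendsto_inv_mul_worstCaseSharpness

/-- First-order asymptotics of worst-case elementwise adaptive sharpness at a point where
the rescaled gradient `g = ∇L(w) ⊙ |w|` is nonzero:
`lim_{ρ→0⁺} (1/ρ) max_{‖γ‖_p ≤ ρ} (L(w + γ ⊙ |w|) − L(w)) = ‖g‖_q`. -/
theorem worst_case_adaptive_sharpness_first_order
    (n : ℕ) (hn : 1 ≤ n) (L : (Fin n → ℝ) → ℝ) (hL : ContDiff ℝ 3 L)
    (w : Fin n → ℝ)
    (p q : ℝ≥0∞) [Fact (1 ≤ p)] [Fact (1 ≤ q)] (hpq : 1 / p + 1 / q = 1)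
    (hg : (fun i => fderiv ℝ L w (Pi.single i 1) * |w i|) ≠ (0 : Fin n → ℝ)) :
    Tendsto (fun ρ : ℝ => (1 / ρ) *
        sSup {s : ℝ | ∃ γ : Fin n → ℝ,
          ‖(WithLp.equiv p (Fin n → ℝ)).symm γ‖ ≤ ρ ∧
          s = L (w + fun i => γ i * |w i|) - L w})
      (nhdsWithin 0 (Set.Ioi 0))
      (nhds ‖(WithLp.equiv q (Fin n → ℝ)).symm
        (fun i => fderiv ℝ L w (Pi.single i 1) * |w i|)‖) :=
  worst_case_adaptive_sharpness_first_order_general n L hL w p q hpq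
end

section
/- Let n ≥ 1 and let L : ℝⁿ → ℝ be three times continuously differentiable. Fix w ∈ ℝⁿ with (∂L/∂wᵢ)(w) · |wᵢ| = 0 for every i, and define the symmetric matrix H̃ by H̃ᵢⱼ = (∂²L/∂wᵢ∂wⱼ)(w) · |wᵢ| · |wⱼ|, i.e., H̃ = ∇²L(w) ⊙ (|w||w|ᵀ). Let p ∈ [1, ∞] and suppose there exists γ₀ ≠ 0 with γ₀ᵀ H̃ γ₀ ≥ 0 (H̃ is not negative definite). Then lim_{ρ → 0⁺} (2/ρ²) · sup { L(w + γ ⊙ |w|) − L(w) : ‖γ‖_p ≤ ρ } = sup_{γ ≠ 0} (γᵀ H̃ γ) / ‖γ‖_p². -/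
/-!
The linear term of the Taylor expansion of `L` at `w` vanishes along the scaled directions
`γ ⊙ |w|`, so `L (w + γ ⊙ |w|) - L w = ½ γᵀ H̃ γ + o(‖γ‖²)` with a Peano remainder coming from
the mean value inequality. On the ball of radius `ρ` the quadratic part is at most `½ T ρ²`,
where `T` is the supremum of the quotients `γᵀ H̃ γ / ‖γ‖²` (this uses `T ≥ 0`, since points
strictly inside the ball also compete), and it comes within `ε ρ²` of `½ T ρ²` along a
near-maximizing ray. After the normalization by `2 / ρ²` the remainder disappears.
-/

open scoped ENNReal NNReal

open Filter Asymptotics Metric Set Topology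

section Taylor

variable {E F G : Type*} [NormedAddCommGroup E] [NormedSpace ℝ E] [NormedAddCommGroup F]
  [NormedSpace ℝ F] [NormedAddCommGroup G]

theorem taylor_two_isLittleO {g : E → F} {g' : E → E →L[ℝ] F} {g'' : E →L[ℝ] E →L[ℝ] F} {x : E}
    (hg : ∀ y, HasFDerivAt g (g' y) y) (hg' : HasFDerivAt g' g'' x) :
    (fun y => g y - g x - g' x (y - x) - (1 / 2 : ℝ) • g'' (y - x) (y - x)) =o[𝓝 x]
      fun y => ‖y - x‖ ^ 2 := by
  have hR : ∀ y, HasFDerivAt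
      (fun y => g y - g x - g' x (y - x) - (1 / 2 : ℝ) • g'' (y - x) (y - x))
      (g' y - g' x - g'' (y - x)) y := by
    intro y
    have hsub : HasFDerivAt (fun y : E => y - x) (ContinuousLinearMap.id ℝ E) y :=
      (hasFDerivAt_id y).sub_const x
    have hquad := (g''.hasFDerivAt.comp y hsub).clm_apply hsub
    refine ((((hg y).sub_const _).sub ((g' x).hasFDerivAt.comp y hsub)).sub
      (hquad.const_smul (1 / 2 : ℝ))).congr_fderiv ?_
    ext v
    -- symmetry of `g''` makes `g'' (y - x)` the derivative of `½ g'' (y - x) (y - x)`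
    have hs := second_derivative_symmetric hg hg' v (y - x)
    simp only [sub_apply, smul_apply, add_apply, ContinuousLinearMap.comp_apply,
      ContinuousLinearMap.flip_apply, Function.comp_apply, ContinuousLinearMap.id_apply, hs]
    module
  have hR' : (fun y => g' y - g' x - g'' (y - x)) =o[𝓝 x] fun y => ‖y - x‖ ^ 1 := by
    simpa using hg'.isLittleO.norm_right
  simpa [nhdsWithin_univ] using
    convex_univ.isLittleO_pow_succ (mem_univ x) (fun y _ => (hR y).hasFDerivWithinAt)
      (by simpa [nhdsWithin_univ] using hR')

theorem Asymptotics.IsLittleO.comp_add_clm_sq {φ : F → G} {x : F}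
    (h : φ =o[𝓝 x] fun y => ‖y - x‖ ^ 2) (A : E →L[ℝ] F) :
    (fun γ => φ (x + A γ)) =o[𝓝 0] fun γ => ‖γ‖ ^ 2 := by
  have hA : Tendsto (fun γ => x + A γ) (𝓝 0) (𝓝 x) := by
    simpa using ((A.continuous.tendsto 0).const_add x)
  refine (h.comp_tendsto hA).trans_isBigO (IsBigO.of_bound (‖A‖ ^ 2) (Eventually.of_forall
    fun γ => ?_))
  simpa [← mul_pow] using pow_le_pow_left₀ (norm_nonneg _) (A.le_opNorm γ) 2

end Taylor

section Sharpness

variable {E : Type*} [NormedAddCommGroup E] [NormedSpace ℝ E]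

noncomputable def sharpness (f : E → ℝ) (ρ : ℝ) : ℝ :=
  sSup ((fun x => f x - f 0) '' closedBall 0 ρ)

noncomputable def rayleighSup (B : E →L[ℝ] E →L[ℝ] ℝ) : ℝ :=
  sSup ((fun x => B x x / ‖x‖ ^ 2) '' {0}ᶜ)

variable {f : E → ℝ} {B : E →L[ℝ] E →L[ℝ] ℝ} {ε ρ : ℝ}

theorem bddAbove_rayleigh_quotients (B : E →L[ℝ] E →L[ℝ] ℝ) :
    BddAbove ((fun x => B x x / ‖x‖ ^ 2) '' {0}ᶜ) := by
  refine ⟨‖B‖, forall_mem_image.2 fun x hx => ?_⟩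
  rw [div_le_iff₀ (pow_pos (norm_pos_iff.2 hx) 2), sq, ← mul_assoc]
  exact (le_abs_self _).trans (B.le_opNorm₂ x x)

theorem apply_self_le_rayleighSup_mul (B : E →L[ℝ] E →L[ℝ] ℝ) (x : E) :
    B x x ≤ rayleighSup B * ‖x‖ ^ 2 := by
  rcases eq_or_ne x 0 with rfl | hx
  · simp
  · rw [← div_le_iff₀ (by positivity)]
    exact le_csSup (bddAbove_rayleigh_quotients B) (mem_image_of_mem _ hx)

theorem rayleighSup_nonneg (h : ∃ x ≠ 0, 0 ≤ B x x) : 0 ≤ rayleighSup B := by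
  obtain ⟨x, hx, hBx⟩ := h
  exact (div_nonneg hBx (by positivity)).trans
    (le_csSup (bddAbove_rayleigh_quotients B) (mem_image_of_mem _ hx))

section Remainder

variable (hε : 0 ≤ ε) (hB : 0 ≤ rayleighSup B)
  (hR : ∀ x ∈ closedBall (0 : E) ρ, |f x - f 0 - B x x / 2| ≤ ε * ‖x‖ ^ 2)
include hε hB hR

theorem mem_upperBounds_image_closedBall :
    (rayleighSup B / 2 + ε) * ρ ^ 2 ∈ upperBounds ((fun x => f x - f 0) '' closedBall 0 ρ) := by
  refine forall_mem_image.2 fun x hx => ?_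
  have hxρ : ‖x‖ ^ 2 ≤ ρ ^ 2 := by
    have := mem_closedBall_zero_iff.1 hx
    gcongr
  have := apply_self_le_rayleighSup_mul B x
  have := (abs_le.1 (hR x hx)).2
  nlinarith

theorem sharpness_le (hρ : 0 ≤ ρ) : sharpness f ρ ≤ (rayleighSup B / 2 + ε) * ρ ^ 2 :=
  csSup_le ((nonempty_closedBall.2 hρ).image _) (mem_upperBounds_image_closedBall hε hB hR)

theorem le_sharpness (hρ : 0 ≤ ρ) {x : E} (hx : x ≠ 0) :
    (B x x / ‖x‖ ^ 2 / 2 - ε) * ρ ^ 2 ≤ sharpness f ρ := by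
  have hx' : 0 < ‖x‖ := norm_pos_iff.2 hx
  set y := (ρ / ‖x‖) • x
  have hy : ‖y‖ = ρ := by
    rw [norm_smul, Real.norm_eq_abs, abs_of_nonneg (by positivity), div_mul_cancel₀ _ hx'.ne']
  have hBy : B y y = B x x / ‖x‖ ^ 2 * ρ ^ 2 := by
    simp only [y, map_smul, smul_apply, smul_eq_mul]
    field_simp
  have hmem : y ∈ closedBall 0 ρ := mem_closedBall_zero_iff.2 hy.le
  have hlow := (abs_le.1 (hR y hmem)).1
  rw [hy, hBy] at hlow
  calc (B x x / ‖x‖ ^ 2 / 2 - ε) * ρ ^ 2 ≤ f y - f 0 := by linarith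
    _ ≤ sharpness f ρ :=
      le_csSup ⟨_, mem_upperBounds_image_closedBall hε hB hR⟩ (mem_image_of_mem _ hmem)

end Remainder

theorem tendsto_sharpness
    (hf : (fun x => f x - f 0 - B x x / 2) =o[𝓝 0] fun x => ‖x‖ ^ 2)
    (h₀ : ∃ x ≠ 0, 0 ≤ B x x) :
    Tendsto (fun ρ => 2 / ρ ^ 2 * sharpness f ρ) (𝓝[>] 0) (𝓝 (rayleighSup B)) := by
  have hB := rayleighSup_nonneg h₀
  refine Metric.tendsto_nhds.2 fun ε hε => ?_
  obtain ⟨δ, hδ, hsmall⟩ := Metric.eventually_nhds_iff.1 (hf.def (by positivity : 0 < ε / 4))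
  filter_upwards [Ioo_mem_nhdsGT hδ] with ρ ⟨hρ, hρδ⟩
  have hR : ∀ x ∈ closedBall (0 : E) ρ, |f x - f 0 - B x x / 2| ≤ ε / 4 * ‖x‖ ^ 2 := by
    intro x hx
    simpa using hsmall ((mem_closedBall.1 hx).trans_lt hρδ)
  have hscale : ∀ a, 2 / ρ ^ 2 * (a * ρ ^ 2) = 2 * a := fun a => by field_simp
  obtain ⟨_, ⟨x, hx, rfl⟩, hlt⟩ := exists_lt_of_lt_csSup
    (Set.Nonempty.image _ (h₀.imp fun _ hx => hx.1))
    (sub_lt_self (rayleighSup B) (by positivity : 0 < ε / 4))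
  have hup := mul_le_mul_of_nonneg_left (sharpness_le (by positivity) hB hR hρ.le)
    (by positivity : (0 : ℝ) ≤ 2 / ρ ^ 2)
  have hlow := mul_le_mul_of_nonneg_left (le_sharpness (by positivity) hB hR hρ.le hx)
    (by positivity : (0 : ℝ) ≤ 2 / ρ ^ 2)
  rw [hscale] at hup hlow
  rw [Real.dist_eq, abs_sub_lt_iff]
  constructor <;> linarith

end Sharpness

section Coordinates

variable {ι R : Type*} [Fintype ι] [DecidableEq ι] [CommSemiring R]

theorem LinearMap.apply_mul_eq_zero (ℓ : (ι → R) →ₗ[R] R) {c : ι → R}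
    (h : ∀ i, ℓ (Pi.single i 1) * c i = 0) (x : ι → R) : ℓ (fun i => x i * c i) = 0 := by
  rw [pi_eq_sum_univ' fun i => x i * c i, map_sum]
  refine Finset.sum_eq_zero fun i _ => ?_
  rw [map_smul, smul_eq_mul, mul_assoc, mul_comm (c i), h, mul_zero]

theorem LinearMap.apply_apply_eq_sum_sum (B : (ι → R) →ₗ[R] (ι → R) →ₗ[R] R) (x y : ι → R) :
    B x y = ∑ i, ∑ j, x i * B (Pi.single i 1) (Pi.single j 1) * y j := by
  conv_lhs => rw [← Matrix.toBilin'_toMatrix' B, Matrix.toBilin'_apply]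
  simp

end Coordinates

noncomputable def scaleCoords {ι : Type*} [Fintype ι] (p : ℝ≥0∞) [Fact (1 ≤ p)] (c : ι → ℝ) :
    WithLp p (ι → ℝ) →L[ℝ] (ι → ℝ) :=
  ContinuousLinearMap.pi fun i => (PiLp.proj p (fun _ => ℝ) i).smulRight (c i)

@[simp]
theorem scaleCoords_toLp {ι : Type*} [Fintype ι] (p : ℝ≥0∞) [Fact (1 ≤ p)] (c x : ι → ℝ) :
    scaleCoords p c (WithLp.toLp p x) = fun i => x i * c i := rfl

theorem sum_sum_fderiv_apply_single_mul {ι : Type*} [Fintype ι] [DecidableEq ι]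
    {L : (ι → ℝ) → ℝ} {w : ι → ℝ} (hL : DifferentiableAt ℝ (fderiv ℝ L) w) (c γ : ι → ℝ) :
    ∑ i, ∑ j, γ i * (fderiv ℝ (fun x => fderiv ℝ L x (Pi.single j 1)) w (Pi.single i 1)
      * (c i * c j)) * γ j =
      fderiv ℝ (fderiv ℝ L) w (fun i => γ i * c i) (fun i => γ i * c i) := by
  rw [← ContinuousLinearMap.toLinearMap₁₂_apply_apply_apply, LinearMap.apply_apply_eq_sum_sum]
  refine Finset.sum_congr rfl fun i _ => Finset.sum_congr rfl fun j _ => ?_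
  rw [(hL.hasFDerivAt.clm_apply (hasFDerivAt_const _ w)).fderiv]
  simp
  ring

theorem worst_case_adaptive_sharpness_second_order_general
    (n : ℕ) (L : (Fin n → ℝ) → ℝ) (hL : ContDiff ℝ 3 L)
    (w : Fin n → ℝ)
    (hcrit : ∀ i, fderiv ℝ L w (Pi.single i 1) * |w i| = 0)
    (p : ℝ≥0∞) [Fact (1 ≤ p)]
    (hnotneg : ∃ γ₀ : Fin n → ℝ, γ₀ ≠ 0 ∧
      0 ≤ ∑ i, ∑ j, γ₀ i *
        (fderiv ℝ (fun x => fderiv ℝ L x (Pi.single j 1)) w (Pi.single i 1)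
          * (|w i| * |w j|)) * γ₀ j) :
    Tendsto (fun ρ : ℝ => (2 / ρ ^ 2) *
        sSup {s : ℝ | ∃ γ : Fin n → ℝ,
          ‖(WithLp.equiv p (Fin n → ℝ)).symm γ‖ ≤ ρ ∧
          s = L (w + fun i => γ i * |w i|) - L w})
      (nhdsWithin 0 (Set.Ioi 0))
      (nhds (sSup {r : ℝ | ∃ γ : Fin n → ℝ, γ ≠ 0 ∧
        r = (∑ i, ∑ j, γ i *
              (fderiv ℝ (fun x => fderiv ℝ L x (Pi.single j 1)) w (Pi.single i 1)
                * (|w i| * |w j|)) * γ j)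
            / ‖(WithLp.equiv p (Fin n → ℝ)).symm γ‖ ^ 2})) := by
  have hdL : ∀ y, HasFDerivAt L (fderiv ℝ L y) y := fun y =>
    (hL.differentiable (by norm_num) y).hasFDerivAt
  have hH : HasFDerivAt (fderiv ℝ L) (fderiv ℝ (fderiv ℝ L) w) w :=
    ((hL.fderiv_right (m := 2) (by norm_num)).differentiable (by norm_num) w).hasFDerivAt
  set A := scaleCoords p fun i => |w i|
  set B := (fderiv ℝ (fderiv ℝ L) w).bilinearComp A A
  have hquad (γ : Fin n → ℝ) := sum_sum_fderiv_apply_single_mul hH.differentiableAt (|w ·|) γ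
  have hlin (γ) : fderiv ℝ L w (A γ) = 0 :=
    LinearMap.apply_mul_eq_zero (fderiv ℝ L w : (Fin n → ℝ) →ₗ[ℝ] ℝ) hcrit γ
  have htaylor : (fun γ => L (w + A γ) - L (w + A 0) - B γ γ / 2) =o[𝓝 0] fun γ => ‖γ‖ ^ 2 := by
    simpa [hlin, div_eq_inv_mul, B] using (taylor_two_isLittleO hdL hH).comp_add_clm_sq A
  have h₀ : ∃ x ≠ 0, 0 ≤ B x x := by
    obtain ⟨γ, hγ, hq⟩ := hnotneg
    exact ⟨WithLp.toLp p γ, by simpa using hγ, by simpa [hquad, A, B] using hq⟩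
  convert tendsto_sharpness htaylor h₀ using 3 with ρ
  · unfold sharpness
    congr 1
    ext s
    simp [A, (WithLp.equiv p (Fin n → ℝ)).exists_congr_left, eq_comm]
  · unfold rayleighSup
    congr 1
    ext r
    simp [hquad, A, B, (WithLp.equiv p (Fin n → ℝ)).exists_congr_left, eq_comm (b := r)]

/-- Second-order asymptotics of worst-case elementwise adaptive sharpness at a critical point
(of the rescaled gradient) where `H̃ = ∇²L(w) ⊙ |w||w|ᵀ` is not negative definite:
`lim_{ρ→0⁺} (2/ρ²) max_{‖γ‖_p ≤ ρ} (L(w + γ ⊙ |w|) − L(w)) = sup_{γ ≠ 0} γᵀH̃γ/‖γ‖_p²`. -/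
theorem worst_case_adaptive_sharpness_second_order
    (n : ℕ) (hn : 1 ≤ n) (L : (Fin n → ℝ) → ℝ) (hL : ContDiff ℝ 3 L)
    (w : Fin n → ℝ)
    (hcrit : ∀ i, fderiv ℝ L w (Pi.single i 1) * |w i| = 0)
    (p : ℝ≥0∞) [Fact (1 ≤ p)]
    (hnotneg : ∃ γ₀ : Fin n → ℝ, γ₀ ≠ 0 ∧
      0 ≤ ∑ i, ∑ j, γ₀ i *
        (fderiv ℝ (fun x => fderiv ℝ L x (Pi.single j 1)) w (Pi.single i 1)
          * (|w i| * |w j|)) * γ₀ j) :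
    Tendsto (fun ρ : ℝ => (2 / ρ ^ 2) *
        sSup {s : ℝ | ∃ γ : Fin n → ℝ,
          ‖(WithLp.equiv p (Fin n → ℝ)).symm γ‖ ≤ ρ ∧
          s = L (w + fun i => γ i * |w i|) - L w})
      (nhdsWithin 0 (Set.Ioi 0))
      (nhds (sSup {r : ℝ | ∃ γ : Fin n → ℝ, γ ≠ 0 ∧
        r = (∑ i, ∑ j, γ i *
              (fderiv ℝ (fun x => fderiv ℝ L x (Pi.single j 1)) w (Pi.single i 1)
                * (|w i| * |w j|)) * γ j)
            / ‖(WithLp.equiv p (Fin n → ℝ)).symm γ‖ ^ 2})) :=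
  worst_case_adaptive_sharpness_second_order_general n L hL w hcrit p hnotneg
end

section
/- Let n ≥ 1 and let L : ℝⁿ → ℝ be three times continuously differentiable. Fix w ∈ ℝⁿ with (∂L/∂wᵢ)(w) · |wᵢ| = 0 for every i, and define the symmetric matrix H̃ by H̃ᵢⱼ = (∂²L/∂wᵢ∂wⱼ)(w) · |wᵢ| · |wⱼ|. Let p ∈ [1, ∞] and suppose H̃ is negative definite, i.e., γᵀ H̃ γ < 0 for every γ ≠ 0. Then there exist constants C > 0 and ρ₀ > 0 such that for all ρ ∈ (0, ρ₀), 0 ≤ sup { L(w + γ ⊙ |w|) − L(w) : ‖γ‖_p ≤ ρ } ≤ C ρ³. -/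
/-!
Write `g γ = L (w + γ ⊙ |w|)`. The hypothesis on the rescaled gradient says `g'(0) = 0`, and
`g''(0)` is the quadratic form of `H̃`, which is negative definite. By the second-derivative test
(Peano remainder plus coercivity of `-H̃` on the finite-dimensional space) `0` is a local maximum
of `g`. Since the `ℓ_p` ball of radius `ρ` lies in the `ℓ_∞` ball of the same radius, for small
`ρ` every admissible perturbation has `g γ - g 0 ≤ 0`, while `γ = 0` gives `0`: the supremum is
exactly `0`, which is trivially at most `C ρ³`.
-/

open scoped ENNReal NNReal
open Filter Topology Metric Asymptotics

section SecondDerivativeTest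

variable {E F : Type*} [NormedAddCommGroup E] [NormedSpace ℝ E]
  [NormedAddCommGroup F] [NormedSpace ℝ F]

theorem hasFDerivAt_taylor_remainder_two {f : E → F} {x u : E}
    (hf : DifferentiableAt ℝ f (x + u)) (hsymm : IsSymmSndFDerivAt ℝ f x) :
    HasFDerivAt
      (fun v => f (x + v) - f x - fderiv ℝ f x v - (1 / 2 : ℝ) • fderiv ℝ (fderiv ℝ f) x v v)
      (fderiv ℝ f (x + u) - fderiv ℝ f x - fderiv ℝ (fderiv ℝ f) x u) u := by
  set B := fderiv ℝ (fderiv ℝ f) x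
  have hf' : HasFDerivAt (fun v => f (x + v)) (fderiv ℝ f (x + u)) u :=
    (hasFDerivAt_comp_add_left x).2 hf.hasFDerivAt
  have hq : HasFDerivAt (fun v => B v v) (B u + B.flip u) u := by
    simpa using B.hasFDerivAt.clm_apply (hasFDerivAt_id u)
  have hflip : B.flip u = B u := by ext t; exact hsymm t u
  refine (((hf'.sub_const (f x)).sub (fderiv ℝ f x).hasFDerivAt).sub
    (hq.const_smul (1 / 2 : ℝ))).congr_fderiv ?_
  rw [hflip]
  module

theorem isLittleO_taylor_remainder_two {f : E → F} {x : E}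
    (hf : ∀ᶠ y in 𝓝 x, DifferentiableAt ℝ f y) (hf' : DifferentiableAt ℝ (fderiv ℝ f) x)
    (hsymm : IsSymmSndFDerivAt ℝ f x) :
    (fun v => f (x + v) - f x - fderiv ℝ f x v - (1 / 2 : ℝ) • fderiv ℝ (fderiv ℝ f) x v v)
      =o[𝓝 0] fun v => ‖v‖ ^ 2 := by
  rw [isLittleO_iff]
  intro ε hε
  have hf₀ : ∀ᶠ u in 𝓝 (0 : E), DifferentiableAt ℝ f (x + u) :=
    ((continuous_const_add x).tendsto' 0 x (add_zero x)).eventually hf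
  have hf'₀ := isLittleO_iff.1 (hasFDerivAt_iff_isLittleO_nhds_zero.1 hf'.hasFDerivAt) hε
  obtain ⟨δ, hδ, hball⟩ := eventually_nhds_iff_ball.1 (hf₀.and hf'₀)
  filter_upwards [ball_mem_nhds 0 hδ] with v hv
  have hsub : closedBall (0 : E) ‖v‖ ⊆ ball 0 δ :=
    closedBall_subset_ball (mem_ball_zero_iff.1 hv)
  have hmv := (convex_closedBall (0 : E) ‖v‖).norm_image_sub_le_of_norm_hasFDerivWithin_le
    (fun u hu => (hasFDerivAt_taylor_remainder_two (hball u (hsub hu)).1 hsymm).hasFDerivWithinAt)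
    (fun u hu => (hball u (hsub hu)).2.trans
      (mul_le_mul_of_nonneg_left (mem_closedBall_zero_iff.1 hu) hε.le))
    (mem_closedBall_self (norm_nonneg v)) (mem_closedBall_zero_iff.2 le_rfl)
  simpa [pow_two, mul_assoc] using hmv

theorem isCoercive_of_forall_pos [FiniteDimensional ℝ E] {B : E →L[ℝ] E →L[ℝ] ℝ}
    (hB : ∀ u ≠ 0, 0 < B u u) : IsCoercive B := by
  rcases subsingleton_or_nontrivial E with hE | hE
  · exact ⟨1, one_pos, fun u => by simp [Subsingleton.elim u 0]⟩
  obtain ⟨u₀, hu₀, hmin⟩ := (isCompact_sphere (0 : E) 1).exists_isMinOn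
    (NormedSpace.sphere_nonempty.2 zero_le_one)
    (by fun_prop : Continuous fun u => B u u).continuousOn
  refine ⟨B u₀ u₀, hB u₀ (ne_zero_of_mem_unit_sphere ⟨u₀, hu₀⟩), fun u => ?_⟩
  rcases eq_or_ne u 0 with rfl | hu
  · simp
  have hu' : 0 < ‖u‖ := norm_pos_iff.2 hu
  have hmin_u : B u₀ u₀ ≤ ‖u‖⁻¹ ^ 2 * B u u := by
    simpa [sq, mul_assoc] using hmin (a := ‖u‖⁻¹ • u) (by simp [norm_smul, hu'.ne'])
  calc B u₀ u₀ * ‖u‖ * ‖u‖ ≤ ‖u‖⁻¹ ^ 2 * B u u * ‖u‖ * ‖u‖ := by gcongr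
    _ = B u u := by field_simp

theorem isLocalMax_of_fderiv_fderiv_neg [FiniteDimensional ℝ E] {f : E → ℝ} {x : E}
    (hf : ContDiffAt ℝ 2 f x) (hd : fderiv ℝ f x = 0)
    (hneg : ∀ v ≠ 0, fderiv ℝ (fderiv ℝ f) x v v < 0) : IsLocalMax f x := by
  set B := fderiv ℝ (fderiv ℝ f) x
  obtain ⟨c, hc, hcoer⟩ := isCoercive_of_forall_pos (B := -B) fun v hv => by
    simpa using hneg v hv
  have hT := isLittleO_taylor_remainder_two
    (hf.eventually (by simp) |>.mono fun y hy => hy.differentiableAt (by simp))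
    ((hf.fderiv_right (m := 1) (by norm_num)).differentiableAt one_ne_zero)
    (hf.isSymmSndFDerivAt (by simp))
  have hmax : ∀ᶠ v in 𝓝 (0 : E), f (x + v) ≤ f x := by
    filter_upwards [isLittleO_iff.1 hT (half_pos hc)] with v hv
    have hBv : c * ‖v‖ * ‖v‖ ≤ -B v v := by simpa using hcoer v
    rw [hd, Real.norm_eq_abs, Real.norm_eq_abs, abs_le] at hv
    simp only [zero_apply, sub_zero, smul_eq_mul, abs_pow, abs_norm] at hv
    nlinarith [hv.2]
  filter_upwards [((continuous_sub_right x).tendsto' x 0 (sub_self x)).eventually hmax] with y hy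
  simpa using hy

end SecondDerivativeTest

section AffineChainRule

variable {E F G : Type*} [NormedAddCommGroup E] [NormedSpace ℝ E]
  [NormedAddCommGroup F] [NormedSpace ℝ F] [NormedAddCommGroup G] [NormedSpace ℝ G]

theorem fderiv_comp_const_add_clm_apply {f : E → F} {a : E} {y : G} (A : G →L[ℝ] E)
    (hf : DifferentiableAt ℝ f (a + A y)) (u : G) :
    fderiv ℝ (fun z => f (a + A z)) y u = fderiv ℝ f (a + A y) (A u) := by
  have h : HasFDerivAt (fun z => a + A z) A y := A.hasFDerivAt.const_add a
  exact congr($((hf.hasFDerivAt.comp y h).fderiv) u)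

theorem fderiv_fderiv_comp_const_add_clm_apply {f : E → F} (hf : ContDiff ℝ 2 f)
    (a : E) (A : G →L[ℝ] E) (y u v : G) :
    fderiv ℝ (fderiv ℝ (fun z => f (a + A z))) y u v =
      fderiv ℝ (fderiv ℝ f) (a + A y) (A u) (A v) := by
  have h := A.iteratedFDeriv_comp_right (f := fun e => f (a + e))
    (hf.comp (contDiff_const.add contDiff_id)) y le_rfl
  rw [iteratedFDeriv_comp_add_left] at h
  have huv := congr($h ![u, v])
  simp only [iteratedFDeriv_two_apply, ContinuousMultilinearMap.compContinuousLinearMap_apply,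
    Matrix.cons_val_zero, Matrix.cons_val_one] at huv
  exact huv

theorem fderiv_clm_apply_const {c : E → F →L[ℝ] G} {x : E} (hc : DifferentiableAt ℝ c x)
    (u : E) (v : F) : fderiv ℝ (fun y => c y v) x u = fderiv ℝ c x u v := by
  simp [(hc.hasFDerivAt.clm_apply (hasFDerivAt_const v x)).fderiv]

end AffineChainRule

section Coordinates

variable {ι : Type*} [Fintype ι]

theorem PiLp.norm_ofLp_le {p : ℝ≥0∞} [Fact (1 ≤ p)] {β : ι → Type*}
    [∀ i, SeminormedAddCommGroup (β i)] (x : PiLp p β) : ‖WithLp.ofLp x‖ ≤ ‖x‖ :=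
  (pi_norm_le_iff_of_nonneg (norm_nonneg x)).2 fun i => PiLp.norm_apply_le x i

variable [DecidableEq ι]

theorem ContinuousLinearMap.apply_eq_sum_smul_single {M : Type*} [AddCommMonoid M] [Module ℝ M]
    [TopologicalSpace M] (φ : (ι → ℝ) →L[ℝ] M) (v : ι → ℝ) :
    φ v = ∑ i, v i • φ (Pi.single i 1) := by
  rw [← φ.coe_coe, φ.toLinearMap.pi_apply_eq_sum_univ v]
  refine Finset.sum_congr rfl fun i _ => ?_
  congr 2
  ext j
  simp [Pi.single_apply, eq_comm]

theorem ContinuousLinearMap.apply_apply_eq_sum_mul (B : (ι → ℝ) →L[ℝ] (ι → ℝ) →L[ℝ] ℝ)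
    (u v : ι → ℝ) : B u v = ∑ i, ∑ j, u i * B (Pi.single i 1) (Pi.single j 1) * v j := by
  rw [B.apply_eq_sum_smul_single u]
  simp only [FunLike.coe_sum, FunLike.coe_smul, Finset.sum_apply, Pi.smul_apply, smul_eq_mul]
  refine Finset.sum_congr rfl fun i _ => ?_
  rw [(B (Pi.single i 1)).apply_eq_sum_smul_single v, Finset.mul_sum]
  exact Finset.sum_congr rfl fun j _ => by simp only [smul_eq_mul]; ring

end Coordinates

theorem isLocalMax_adaptive_perturbation {n : ℕ} {L : (Fin n → ℝ) → ℝ} (hL : ContDiff ℝ 2 L)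
    {w : Fin n → ℝ} (hcrit : ∀ i, fderiv ℝ L w (Pi.single i 1) * |w i| = 0)
    (hnegdef : ∀ γ : Fin n → ℝ, γ ≠ 0 →
      ∑ i, ∑ j, γ i *
        (fderiv ℝ (fun x => fderiv ℝ L x (Pi.single j 1)) w (Pi.single i 1)
          * (|w i| * |w j|)) * γ j < 0) :
    IsLocalMax (fun γ : Fin n → ℝ => L (w + fun i => γ i * |w i|)) 0 := by
  set D : (Fin n → ℝ) →L[ℝ] (Fin n → ℝ) := (ContinuousLinearMap.mul ℝ (Fin n → ℝ)).flip |w|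
  have hD : ∀ γ i, D γ i = γ i * |w i| := fun _ _ => rfl
  have hL'w : DifferentiableAt ℝ (fderiv ℝ L) w :=
    (hL.fderiv_right (m := 1) (by norm_num)).differentiable one_ne_zero w
  show IsLocalMax (fun γ => L (w + D γ)) 0
  refine isLocalMax_of_fderiv_fderiv_neg
    (hL.comp (contDiff_const.add D.contDiff)).contDiffAt ?_ fun γ hγ => ?_
  · ext1 γ
    rw [fderiv_comp_const_add_clm_apply D (hL.differentiable (by norm_num) _), map_zero,
      add_zero, (fderiv ℝ L w).apply_eq_sum_smul_single]
    refine Finset.sum_eq_zero fun i _ => ?_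
    rw [smul_eq_mul, hD]
    linear_combination γ i * hcrit i
  · rw [fderiv_fderiv_comp_const_add_clm_apply hL, map_zero, add_zero,
      ContinuousLinearMap.apply_apply_eq_sum_mul]
    convert hnegdef γ hγ using 1
    simp only [fderiv_clm_apply_const hL'w, hD]
    exact Finset.sum_congr rfl fun i _ => Finset.sum_congr rfl fun j _ => by ring

theorem worst_case_adaptive_sharpness_negative_definite_general
    (n : ℕ) (L : (Fin n → ℝ) → ℝ) (hL : ContDiff ℝ 3 L)
    (w : Fin n → ℝ)
    (hcrit : ∀ i, fderiv ℝ L w (Pi.single i 1) * |w i| = 0)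
    (p : ℝ≥0∞) [Fact (1 ≤ p)]
    (hnegdef : ∀ γ : Fin n → ℝ, γ ≠ 0 →
      ∑ i, ∑ j, γ i *
        (fderiv ℝ (fun x => fderiv ℝ L x (Pi.single j 1)) w (Pi.single i 1)
          * (|w i| * |w j|)) * γ j < 0) :
    ∃ C > (0 : ℝ), ∃ ρ₀ > (0 : ℝ), ∀ ρ : ℝ, 0 < ρ → ρ < ρ₀ →
      0 ≤ sSup {s : ℝ | ∃ γ : Fin n → ℝ,
          ‖(WithLp.equiv p (Fin n → ℝ)).symm γ‖ ≤ ρ ∧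
          s = L (w + fun i => γ i * |w i|) - L w} ∧
      sSup {s : ℝ | ∃ γ : Fin n → ℝ,
          ‖(WithLp.equiv p (Fin n → ℝ)).symm γ‖ ≤ ρ ∧
          s = L (w + fun i => γ i * |w i|) - L w} ≤ C * ρ ^ 3 := by
  obtain ⟨ρ₀, hρ₀, hball⟩ := eventually_nhds_iff_ball.1
    (isLocalMax_adaptive_perturbation (hL.of_le (by norm_num)) hcrit hnegdef)
  refine ⟨1, one_pos, ρ₀, hρ₀, fun ρ hρ hρρ₀ => ?_⟩
  rw [(?hG : IsGreatest _ (0 : ℝ)).csSup_eq]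
  · exact ⟨le_rfl, by positivity⟩
  refine ⟨⟨0, by simpa using hρ.le, by simp [← Pi.zero_def]⟩, ?_⟩
  rintro s ⟨γ, hγ, rfl⟩
  have hγ₀ : γ ∈ ball 0 ρ₀ :=
    mem_ball_zero_iff.2 ((PiLp.norm_ofLp_le (WithLp.toLp p γ)).trans_lt (hγ.trans_lt hρρ₀))
  simpa [← Pi.zero_def] using hball γ hγ₀

/-- If the rescaled gradient vanishes and `H̃ = ∇²L(w) ⊙ |w||w|ᵀ` is negative definite, the
worst-case elementwise adaptive sharpness is `O(ρ³)` (and nonnegative) for small `ρ`. -/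
theorem worst_case_adaptive_sharpness_negative_definite
    (n : ℕ) (hn : 1 ≤ n) (L : (Fin n → ℝ) → ℝ) (hL : ContDiff ℝ 3 L)
    (w : Fin n → ℝ)
    (hcrit : ∀ i, fderiv ℝ L w (Pi.single i 1) * |w i| = 0)
    (p : ℝ≥0∞) [Fact (1 ≤ p)]
    (hnegdef : ∀ γ : Fin n → ℝ, γ ≠ 0 →
      ∑ i, ∑ j, γ i *
        (fderiv ℝ (fun x => fderiv ℝ L x (Pi.single j 1)) w (Pi.single i 1)
          * (|w i| * |w j|)) * γ j < 0) :
    ∃ C > (0 : ℝ), ∃ ρ₀ > (0 : ℝ), ∀ ρ : ℝ, 0 < ρ → ρ < ρ₀ →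
      0 ≤ sSup {s : ℝ | ∃ γ : Fin n → ℝ,
          ‖(WithLp.equiv p (Fin n → ℝ)).symm γ‖ ≤ ρ ∧
          s = L (w + fun i => γ i * |w i|) - L w} ∧
      sSup {s : ℝ | ∃ γ : Fin n → ℝ,
          ‖(WithLp.equiv p (Fin n → ℝ)).symm γ‖ ≤ ρ ∧
          s = L (w + fun i => γ i * |w i|) - L w} ≤ C * ρ ^ 3 :=
  worst_case_adaptive_sharpness_negative_definite_general n L hL w hcrit p hnegdef
end

section
/- Let d ≥ 1 and u, v ∈ ℝᵈ with uᵢ ≠ 0 and vᵢ ≠ 0 for all i. Let M be the real 2d × 2d symmetric matrix with blocks M(inl i, inl j) = δᵢⱼ vᵢ², M(inr i, inr j) = δᵢⱼ uᵢ², M(inl i, inr j) = M(inr i, inl j) = δᵢⱼ uᵢ vᵢ. Define c ∈ ℝ^{2d} by c(inl i) = √(|uᵢ|/|vᵢ|) and c(inr i) = √(|vᵢ|/|uᵢ|), and let M̃ be the rescaled matrix with entries M̃_{ab} = M_{ab} c_a c_b (i.e., M̃ = M ⊙ ccᵀ). Then (1/2) · trace(M̃) = Σ_{i=1}^{d} |uᵢ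 vᵢ| = ‖u ⊙ v‖₁; that is, the average-case adaptive local sharpness of the diagonal linear network with this elementwise scaling equals the ℓ₁ norm of the predictor β = u ⊙ v. -/
/-- With elementwise scaling `c(inl i) = √(|uᵢ|/|vᵢ|)`, `c(inr i) = √(|vᵢ|/|uᵢ|)`, half the
trace of the rescaled Hessian `M̃ = M ⊙ ccᵀ` of the diagonal linear network equals
`‖u ⊙ v‖₁ = ∑ᵢ |uᵢ vᵢ|`. -/
theorem diagonal_linear_network_avg_adaptive_sharpness_l1
    (d : ℕ) (hd : 1 ≤ d) (u v : Fin d → ℝ)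
    (hu : ∀ i, u i ≠ 0) (hv : ∀ i, v i ≠ 0) :
    (1 / 2 : ℝ) * Matrix.trace (Matrix.of fun a b : Fin d ⊕ Fin d =>
        Matrix.fromBlocks
            (Matrix.diagonal fun i => v i ^ 2)
            (Matrix.diagonal fun i => u i * v i)
            (Matrix.diagonal fun i => u i * v i)
            (Matrix.diagonal fun i => u i ^ 2) a b
          * Sum.elim (fun i => Real.sqrt (|u i| / |v i|))
              (fun i => Real.sqrt (|v i| / |u i|)) a
          * Sum.elim (fun i => Real.sqrt (|u i| / |v i|))
              (fun i => Real.sqrt (|v i| / |u i|)) b)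
    = ∑ i, |u i * v i| := by
  have key : ∀ i : Fin d,
      v i ^ 2 * Real.sqrt (|u i| / |v i|) * Real.sqrt (|u i| / |v i|)
        + u i ^ 2 * Real.sqrt (|v i| / |u i|) * Real.sqrt (|v i| / |u i|)
      = 2 * |u i * v i| := by
    intro i
    have hu' : (0:ℝ) < |u i| := abs_pos.mpr (hu i)
    have hv' : (0:ℝ) < |v i| := abs_pos.mpr (hv i)
    rw [mul_assoc, mul_assoc,
      Real.mul_self_sqrt (by positivity), Real.mul_self_sqrt (by positivity),
      abs_mul]
    rw [show v i ^ 2 = |v i| ^ 2 from (sq_abs _).symm,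
      show u i ^ 2 = |u i| ^ 2 from (sq_abs _).symm]
    field_simp
    nlinarith [sq_abs (u i), sq_abs (v i)]
  simp only [Matrix.trace, Matrix.diag, Matrix.of_apply, Fintype.sum_sum_type,
    Matrix.fromBlocks_apply₁₁, Matrix.fromBlocks_apply₂₂, Sum.elim_inl, Sum.elim_inr,
    Matrix.diagonal_apply_eq]
  rw [← Finset.sum_add_distrib]
  simp only [key]
  rw [← Finset.mul_sum]
  ring
end

section
/- Let d ≥ 1 and u, v ∈ ℝᵈ with uᵢ ≠ 0 and vᵢ ≠ 0 for all i. Let M be the real 2d × 2d symmetric matrix with blocks M(inl i, inl j) = δᵢⱼ vᵢ², M(inr i, inr j) = δᵢⱼ uᵢ², M(inl i, inr j) = M(inr i, inl j) = δᵢⱼ uᵢ vᵢ. Define c ∈ ℝ^{2d} by c(inl i) = √(|uᵢ|/|vᵢ|) and c(inr i) = √(|vᵢ|/|uᵢ|), and let M̃ have entries M̃_{ab} = M_{ab} c_a c_b. Then (1/2) · sup { ⟨z, M̃ z⟩ / ‖z‖₂² : z ∈ ℝ^{2d}, z ≠ 0 } = max_{1 ≤ i ≤ d} |uᵢ vᵢ|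 = ‖u ⊙ v‖_∞; that is, half the largest eigenvalue of the rescaled Hessian equals the ℓ_∞ norm of the predictor β = u ⊙ v. -/
/-!
Writing `β = u ⊙ v`, the scaling `c` turns the Hessian into the block matrix
`[[diag |β|, diag β], [diag β, diag |β|]]`: it balances the two diagonal blocks to `|uᵢ vᵢ|` and
leaves the off-diagonal ones unchanged because `c(inl i) c(inr i) = 1`. Its quadratic form splits
into the `2 × 2` forms `|βᵢ| x² + 2 βᵢ x y + |βᵢ| y² ≤ 2 |βᵢ| (x² + y²)`, with equality at
`(x, y) = (1, sign βᵢ)`, so the largest Rayleigh quotient is `2 maxᵢ |βᵢ|`.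
-/

open Matrix

section RayleighQuotient

variable {n : Type*} [Fintype n]

def rayleighQuotients (A : Matrix n n ℝ) : Set ℝ :=
  {r | ∃ z : n → ℝ, z ≠ 0 ∧ r = (∑ a, z a * (A *ᵥ z) a) / ∑ a, z a ^ 2}

theorem sum_sq_pos_of_ne_zero {z : n → ℝ} (hz : z ≠ 0) : 0 < ∑ a, z a ^ 2 := by
  obtain ⟨a, ha⟩ := Function.ne_iff.mp hz
  exact Finset.sum_pos' (fun a _ => sq_nonneg (z a))
    ⟨a, Finset.mem_univ a, pow_two_pos_of_ne_zero ha⟩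

theorem sSup_rayleighQuotients_eq {A : Matrix n n ℝ} {c : ℝ}
    (hle : ∀ z, z ⬝ᵥ (A *ᵥ z) ≤ c * ∑ a, z a ^ 2)
    (hattained : ∃ z ≠ 0, z ⬝ᵥ (A *ᵥ z) = c * ∑ a, z a ^ 2) :
    sSup (rayleighQuotients A) = c := by
  refine IsGreatest.csSup_eq ⟨?_, ?_⟩
  · obtain ⟨z, hz, hzc⟩ := hattained
    exact ⟨z, hz, eq_div_of_mul_eq (sum_sq_pos_of_ne_zero hz).ne' hzc.symm⟩
  · rintro r ⟨z, hz, rfl⟩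
    rw [div_le_iff₀ (sum_sq_pos_of_ne_zero hz)]
    exact hle z

end RayleighQuotient

theorem sq_mul_sqrt_abs_div_mul_sqrt_abs_div (x y : ℝ) :
    y ^ 2 * √(|x| / |y|) * √(|x| / |y|) = |x * y| := by
  rw [mul_assoc, Real.mul_self_sqrt (by positivity), ← sq_abs, abs_mul]
  rcases eq_or_ne |y| 0 with hy | hy
  · simp [hy]
  · field_simp

theorem sqrt_abs_div_mul_sqrt_abs_div {x y : ℝ} (hx : x ≠ 0) (hy : y ≠ 0) :
    √(|x| / |y|) * √(|y| / |x|) = 1 := by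
  rw [← Real.sqrt_mul (by positivity), div_mul_div_comm, mul_comm |x|, div_self (by positivity),
    Real.sqrt_one]

theorem abs_mul_sq_add_two_mul_mul_add_abs_mul_sq_le (b x y : ℝ) :
    |b| * x ^ 2 + 2 * b * x * y + |b| * y ^ 2 ≤ 2 * |b| * (x ^ 2 + y ^ 2) := by
  have hxy : 2 * b * x * y ≤ |b| * (x ^ 2 + y ^ 2) := by
    calc 2 * b * x * y = b * (2 * x * y) := by ring
      _ ≤ |b| * |2 * x * y| := by rw [← abs_mul]; exact le_abs_self _
      _ ≤ |b| * (x ^ 2 + y ^ 2) := by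
        gcongr
        exact abs_le.2 ⟨by nlinarith [sq_nonneg (x + y)], two_mul_le_add_sq x y⟩
  linarith

theorem exists_sq_eq_one_and_mul_eq_abs (b : ℝ) : ∃ s : ℝ, s ^ 2 = 1 ∧ b * s = |b| := by
  rcases le_or_gt 0 b with hb | hb
  · exact ⟨1, by norm_num, by rw [mul_one, abs_of_nonneg hb]⟩
  · exact ⟨-1, by norm_num, by rw [mul_neg_one, abs_of_neg hb]⟩

theorem of_fromBlocks_diagonal_mul_sum_elim_mul {ι R : Type*} [DecidableEq ι] [MulZeroClass R]
    (p q r s f g : ι → R) :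
    (Matrix.of fun a b : ι ⊕ ι =>
      fromBlocks (diagonal p) (diagonal q) (diagonal r) (diagonal s) a b
        * Sum.elim f g a * Sum.elim f g b) =
      fromBlocks (diagonal fun i => p i * f i * f i) (diagonal fun i => q i * f i * g i)
        (diagonal fun i => r i * g i * f i) (diagonal fun i => s i * g i * g i) := by
  ext (i | i) (j | j) <;> obtain rfl | hij := eq_or_ne i j <;> simp [*]

/-- Closed form of the rescaled Hessian `M̃`, with `β = u ⊙ v`. -/
def pairBlockMatrix {ι : Type*} [DecidableEq ι] (β : ι → ℝ) : Matrix (ι ⊕ ι) (ι ⊕ ι) ℝ :=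
  fromBlocks (diagonal fun i => |β i|) (diagonal β) (diagonal β) (diagonal fun i => |β i|)

theorem of_fromBlocks_mul_sqrt_abs_div_eq_pairBlockMatrix {ι : Type*} [DecidableEq ι]
    {u v : ι → ℝ} (hu : ∀ i, u i ≠ 0) (hv : ∀ i, v i ≠ 0) :
    (Matrix.of fun a' b : ι ⊕ ι =>
      Matrix.fromBlocks
          (Matrix.diagonal fun i => v i ^ 2)
          (Matrix.diagonal fun i => u i * v i)
          (Matrix.diagonal fun i => u i * v i)
          (Matrix.diagonal fun i => u i ^ 2) a' b
        * Sum.elim (fun i => Real.sqrt (|u i| / |v i|))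
            (fun i => Real.sqrt (|v i| / |u i|)) a'
        * Sum.elim (fun i => Real.sqrt (|u i| / |v i|))
            (fun i => Real.sqrt (|v i| / |u i|)) b) =
      pairBlockMatrix fun i => u i * v i := by
  rw [of_fromBlocks_diagonal_mul_sum_elim_mul, pairBlockMatrix, fromBlocks_inj]
  simp only [diagonal_eq_diagonal_iff]
  refine ⟨fun i => ?_, fun i => ?_, fun i => ?_, fun i => ?_⟩
  · exact sq_mul_sqrt_abs_div_mul_sqrt_abs_div (u i) (v i)
  · rw [mul_assoc, sqrt_abs_div_mul_sqrt_abs_div (hu i) (hv i), mul_one]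
  · rw [mul_assoc, sqrt_abs_div_mul_sqrt_abs_div (hv i) (hu i), mul_one]
  · rw [sq_mul_sqrt_abs_div_mul_sqrt_abs_div, mul_comm]

section PairBlocks

variable {ι : Type*} [Fintype ι] [DecidableEq ι]

theorem dotProduct_fromBlocks_diagonal_mulVec {R : Type*} [CommSemiring R] (p q r : ι → R)
    (z : ι ⊕ ι → R) :
    z ⬝ᵥ (fromBlocks (diagonal p) (diagonal q) (diagonal q) (diagonal r) *ᵥ z) =
      ∑ i, (p i * z (.inl i) ^ 2 + 2 * q i * z (.inl i) * z (.inr i) + r i * z (.inr i) ^ 2) := by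
  simp only [dotProduct, fromBlocks_mulVec, Fintype.sum_sum_type, Sum.elim_inl, Sum.elim_inr,
    Pi.add_apply, Function.comp_apply, mulVec_diagonal, ← Finset.sum_add_distrib]
  exact Finset.sum_congr rfl fun i _ => by ring

theorem dotProduct_pairBlockMatrix_mulVec_le (β : ι → ℝ) {B : ℝ} (hB : ∀ i, |β i| ≤ B)
    (z : ι ⊕ ι → ℝ) : z ⬝ᵥ (pairBlockMatrix β *ᵥ z) ≤ 2 * B * ∑ a, z a ^ 2 := by
  rw [pairBlockMatrix, dotProduct_fromBlocks_diagonal_mulVec, Fintype.sum_sum_type,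
    ← Finset.sum_add_distrib, Finset.mul_sum]
  refine Finset.sum_le_sum fun i _ => ?_
  calc _ ≤ 2 * |β i| * (z (.inl i) ^ 2 + z (.inr i) ^ 2) :=
        abs_mul_sq_add_two_mul_mul_add_abs_mul_sq_le _ _ _
    _ ≤ 2 * B * (z (.inl i) ^ 2 + z (.inr i) ^ 2) := by gcongr; exact hB i

theorem exists_dotProduct_pairBlockMatrix_mulVec_eq (β : ι → ℝ) (i : ι) :
    ∃ z ≠ 0, z ⬝ᵥ (pairBlockMatrix β *ᵥ z) = 2 * |β i| * ∑ a, z a ^ 2 := by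
  obtain ⟨s, hs, hβs⟩ := exists_sq_eq_one_and_mul_eq_abs (β i)
  refine ⟨Sum.elim (Pi.single i 1) (Pi.single i s), fun h => ?_, ?_⟩
  · simpa using congrFun h (.inl i)
  · rw [pairBlockMatrix, dotProduct_fromBlocks_diagonal_mulVec, Fintype.sum_sum_type,
      Fintype.sum_eq_single i, Fintype.sum_eq_single i, Fintype.sum_eq_single i]
    · simp only [Sum.elim_inl, Sum.elim_inr, Pi.single_eq_same]
      linear_combination -|β i| * hs + 2 * hβs
    all_goals intro j hj; simp [Pi.single_eq_of_ne hj]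

theorem sSup_rayleighQuotients_pairBlockMatrix [Nonempty ι] (β : ι → ℝ) :
    sSup (rayleighQuotients (pairBlockMatrix β)) = 2 * ⨆ i, |β i| := by
  obtain ⟨i, hi⟩ := exists_eq_ciSup_of_finite (f := fun i : ι => |β i|)
  refine sSup_rayleighQuotients_eq (dotProduct_pairBlockMatrix_mulVec_le β fun j => ?_) ?_
  · exact le_ciSup (Set.finite_range fun i => |β i|).bddAbove j
  · rw [← hi]; exact exists_dotProduct_pairBlockMatrix_mulVec_eq β i

end PairBlocks

/-- With elementwise scaling `c(inl i) = √(|uᵢ|/|vᵢ|)`, `c(inr i) = √(|vᵢ|/|uᵢ|)`, half the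
largest eigenvalue (sup of the Rayleigh quotient) of the rescaled Hessian `M̃ = M ⊙ ccᵀ`
of the diagonal linear network equals `‖u ⊙ v‖_∞ = max_i |uᵢ vᵢ|`. -/
theorem diagonal_linear_network_worst_adaptive_sharpness_linf
    (d : ℕ) (hd : 1 ≤ d) (u v : Fin d → ℝ)
    (hu : ∀ i, u i ≠ 0) (hv : ∀ i, v i ≠ 0) :
    (1 / 2 : ℝ) * sSup {r : ℝ | ∃ z : (Fin d ⊕ Fin d) → ℝ, z ≠ 0 ∧
        r = (∑ a, z a *
              ((Matrix.of fun a' b : Fin d ⊕ Fin d =>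
                Matrix.fromBlocks
                    (Matrix.diagonal fun i => v i ^ 2)
                    (Matrix.diagonal fun i => u i * v i)
                    (Matrix.diagonal fun i => u i * v i)
                    (Matrix.diagonal fun i => u i ^ 2) a' b
                  * Sum.elim (fun i => Real.sqrt (|u i| / |v i|))
                      (fun i => Real.sqrt (|v i| / |u i|)) a'
                  * Sum.elim (fun i => Real.sqrt (|u i| / |v i|))
                      (fun i => Real.sqrt (|v i| / |u i|)) b).mulVec z a))
            / ∑ a, z a ^ 2}
    = ⨆ i : Fin d, |u i * v i| := by
  have : Nonempty (Fin d) := ⟨⟨0, hd⟩⟩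
  have hsup := sSup_rayleighQuotients_pairBlockMatrix fun i => u i * v i
  rw [← of_fromBlocks_mul_sqrt_abs_div_eq_pairBlockMatrix hu hv, rayleighQuotients] at hsup
  rw [hsup]
  ring
end

section
/- Let d ≥ 1 and u, v ∈ ℝᵈ. Let M be the real 2d × 2d symmetric matrix with blocks M(inl i, inl j) = δᵢⱼ vᵢ², M(inr i, inr j) = δᵢⱼ uᵢ², M(inl i, inr j) = M(inr i, inl j) = δᵢⱼ uᵢ vᵢ. Define c ∈ ℝ^{2d} by c(inl i) = uᵢ and c(inr i) = vᵢ, and let M̃ have entries M̃_{ab} = M_{ab} c_a c_b. Then (1/2) · trace(M̃) = Σ_{i=1}^{d} uᵢ² vᵢ² = ‖u ⊙ v‖₂², and (1/2) · sup { ⟨z, M̃ z⟩ / ‖z‖₂² : z ∈ ℝ^{2d}, z ≠ 0 } = max_{1 ≤ i ≤ d} uᵢ² vᵢ² = ‖u ⊙ v‖_∞²; that is, using the scaling c = w in adaptive sharpness for diagonal linear networks leads to ‖β‖₂² and ‖β‖_∞² for the predictor β = u ⊙ v. -/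
private lemma quad_form (d : ℕ) (u v : Fin d → ℝ) (z : Fin d ⊕ Fin d → ℝ) :
    (∑ a, z a *
              ((Matrix.of fun a' b : Fin d ⊕ Fin d =>
                Matrix.fromBlocks
                    (Matrix.diagonal fun i => v i ^ 2)
                    (Matrix.diagonal fun i => u i * v i)
                    (Matrix.diagonal fun i => u i * v i)
                    (Matrix.diagonal fun i => u i ^ 2) a' b
                  * Sum.elim u v a' * Sum.elim u v b).mulVec z a))
    = ∑ i, u i ^ 2 * v i ^ 2 * (z (.inl i) + z (.inr i)) ^ 2 := by
  simp only [Matrix.mulVec, dotProduct, Matrix.of_apply, Fintype.sum_sum_type,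
    Matrix.fromBlocks_apply₁₁, Matrix.fromBlocks_apply₁₂, Matrix.fromBlocks_apply₂₁,
    Matrix.fromBlocks_apply₂₂, Matrix.diagonal_apply, Sum.elim_inl, Sum.elim_inr,
    ite_mul, zero_mul, Finset.sum_ite_eq, Finset.mem_univ, if_true]
  rw [← Finset.sum_add_distrib]
  apply Finset.sum_congr rfl
  intro i _
  ring

/-- With the scaling `c = w` (i.e. `c(inl i) = uᵢ`, `c(inr i) = vᵢ`), half the trace of the
rescaled Hessian equals `‖u ⊙ v‖₂²` and half its largest eigenvalue (sup of the Rayleigh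
quotient) equals `‖u ⊙ v‖_∞²`. -/
theorem diagonal_linear_network_scaling_w
    (d : ℕ) (hd : 1 ≤ d) (u v : Fin d → ℝ) :
    (1 / 2 : ℝ) * Matrix.trace (Matrix.of fun a b : Fin d ⊕ Fin d =>
        Matrix.fromBlocks
            (Matrix.diagonal fun i => v i ^ 2)
            (Matrix.diagonal fun i => u i * v i)
            (Matrix.diagonal fun i => u i * v i)
            (Matrix.diagonal fun i => u i ^ 2) a b
          * Sum.elim u v a * Sum.elim u v b)
      = ∑ i, u i ^ 2 * v i ^ 2 ∧
    (1 / 2 : ℝ) * sSup {r : ℝ | ∃ z : (Fin d ⊕ Fin d) → ℝ, z ≠ 0 ∧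
        r = (∑ a, z a *
              ((Matrix.of fun a' b : Fin d ⊕ Fin d =>
                Matrix.fromBlocks
                    (Matrix.diagonal fun i => v i ^ 2)
                    (Matrix.diagonal fun i => u i * v i)
                    (Matrix.diagonal fun i => u i * v i)
                    (Matrix.diagonal fun i => u i ^ 2) a' b
                  * Sum.elim u v a' * Sum.elim u v b).mulVec z a))
            / ∑ a, z a ^ 2}
      = ⨆ i : Fin d, u i ^ 2 * v i ^ 2 := by
  have hne : Nonempty (Fin d) := ⟨⟨0, hd⟩⟩
  set b : Fin d → ℝ := fun i => u i ^ 2 * v i ^ 2 with hb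
  have hb0 : ∀ i, 0 ≤ b i := fun i => by positivity
  constructor
  · simp only [Matrix.trace, Matrix.diag, Matrix.of_apply, Fintype.sum_sum_type,
      Matrix.fromBlocks_apply₁₁, Matrix.fromBlocks_apply₂₂, Matrix.diagonal_apply_eq,
      Sum.elim_inl, Sum.elim_inr]
    rw [← Finset.sum_add_distrib, Finset.mul_sum]
    apply Finset.sum_congr rfl
    intro i _
    ring
  · set M : ℝ := ⨆ i, b i with hMdef
    have hbdd : BddAbove (Set.range b) := (Set.finite_range b).bddAbove
    have hle : ∀ i, b i ≤ M := fun i => le_ciSup hbdd i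
    obtain ⟨i₀, hi₀⟩ := Finite.exists_max b
    have hMeq : M = b i₀ := le_antisymm (ciSup_le hi₀) (hle i₀)
    have hM0 : 0 ≤ M := hMeq ▸ hb0 i₀
    -- upper bound on the set
    set S := {r : ℝ | ∃ z : (Fin d ⊕ Fin d) → ℝ, z ≠ 0 ∧
        r = (∑ a, z a *
              ((Matrix.of fun a' b : Fin d ⊕ Fin d =>
                Matrix.fromBlocks
                    (Matrix.diagonal fun i => v i ^ 2)
                    (Matrix.diagonal fun i => u i * v i)
                    (Matrix.diagonal fun i => u i * v i)
                    (Matrix.diagonal fun i => u i ^ 2) a' b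
                  * Sum.elim u v a' * Sum.elim u v b).mulVec z a))
            / ∑ a, z a ^ 2} with hS
    have hub : ∀ r ∈ S, r ≤ 2 * M := by
      rintro r ⟨z, hz, rfl⟩
      rw [quad_form]
      have hzpos : 0 < ∑ a, z a ^ 2 := by
        obtain ⟨a, ha⟩ := Function.ne_iff.mp hz
        have h1 : z a ^ 2 ≤ ∑ a, z a ^ 2 :=
          Finset.single_le_sum (fun i _ => sq_nonneg (z i)) (Finset.mem_univ a)
        have : 0 < z a ^ 2 := lt_of_le_of_ne (sq_nonneg _) (Ne.symm (pow_ne_zero 2 ha))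
        linarith
      rw [div_le_iff₀ hzpos]
      have key : ∑ i, b i * (z (.inl i) + z (.inr i)) ^ 2
          ≤ ∑ i, 2 * M * (z (.inl i) ^ 2 + z (.inr i) ^ 2) := by
        apply Finset.sum_le_sum
        intro i _
        have h1 : b i * (z (.inl i) + z (.inr i)) ^ 2 ≤ M * (z (.inl i) + z (.inr i)) ^ 2 :=
          mul_le_mul_of_nonneg_right (hle i) (sq_nonneg _)
        nlinarith [sq_nonneg (z (.inl i) - z (.inr i))]
      calc ∑ i, b i * (z (.inl i) + z (.inr i)) ^ 2
          ≤ ∑ i, 2 * M * (z (.inl i) ^ 2 + z (.inr i) ^ 2) := key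
        _ = 2 * M * ∑ a, z a ^ 2 := by
            rw [Fintype.sum_sum_type, mul_add, Finset.mul_sum, Finset.mul_sum,
              ← Finset.sum_add_distrib]
            apply Finset.sum_congr rfl
            intro i _; ring
    -- membership of 2 * M
    have hmem : (2 : ℝ) * M ∈ S := by
      refine ⟨Sum.elim (fun i => if i = i₀ then (1:ℝ) else 0)
        (fun i => if i = i₀ then (1:ℝ) else 0), ?_, ?_⟩
      · intro h
        have := congrFun h (Sum.inl i₀)
        simp at this
      · rw [quad_form]
        have hnum : ∑ i, b i *
            ((Sum.elim (fun i => if i = i₀ then (1:ℝ) else 0)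
              (fun i => if i = i₀ then (1:ℝ) else 0)) (.inl i)
            + (Sum.elim (fun i => if i = i₀ then (1:ℝ) else 0)
              (fun i => if i = i₀ then (1:ℝ) else 0)) (.inr i)) ^ 2 = 4 * b i₀ := by
          simp only [Sum.elim_inl, Sum.elim_inr]
          rw [Finset.sum_eq_single i₀ (fun j _ hj => by simp [hj]) (by simp)]
          simp
          ring
        have hden : ∑ a : Fin d ⊕ Fin d, ((Sum.elim (fun i => if i = i₀ then (1:ℝ) else 0)
              (fun i => if i = i₀ then (1:ℝ) else 0)) a) ^ 2 = 2 := by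
          rw [Fintype.sum_sum_type]
          simp only [Sum.elim_inl, Sum.elim_inr]
          rw [Finset.sum_eq_single i₀ (fun j _ hj => by simp [hj]) (by simp)]
          norm_num
        rw [hnum, hden, hMeq]
        ring
    have hsup : sSup S = 2 * M :=
      le_antisymm (csSup_le ⟨_, hmem⟩ hub) (le_csSup ⟨2 * M, hub⟩ hmem)
    rw [hsup]
    ring
end
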